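/- Let J' be an exponential random variable with rate ρ > 0, independent of a nonnegative random variable σ, and let λ > ρ. Then E[e^{λ (σ ∧ J')}] = (λ/(λ−ρ)) E[e^{(λ−ρ)σ}] − ρ/(λ−ρ), where both sides may be +∞ simultaneously. -/

import Mathlib

open Real MeasureTheory ProbabilityTheory

/-!
By the layer cake formula, `E[e^{cX}] = 1 + c ∫₀^∞ P(X > t) e^{ct} dt` for `X ≥ 0` and `c ≥ 0`.
Independence gives `P(σ ∧ J' > t) = P(σ > t) e^{-ρt}`, so with
`A = ∫₀^∞ P(σ > t) e^{(λ-ρ)t} dt` both expectations are affine in `A`: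
`E[e^{λ(σ ∧ J')}] = 1 + λA` and `E[e^{(λ-ρ)σ}] = 1 + (λ-ρ)A`. Eliminating `A` gives the identity,
in `ℝ≥0∞`, including the case `A = ∞`.
-/

theorem integral_const_mul_exp_const_mul (c x : ℝ) :
    ∫ t in (0 : ℝ)..x, c * exp (c * t) = exp (c * x) - 1 := by
  rcases eq_or_ne c 0 with rfl | hc
  · simp
  simp only [intervalIntegral.integral_const_mul,
    intervalIntegral.integral_comp_mul_left (fun t => exp t) hc, mul_zero, integral_exp, exp_zero,
    smul_eq_mul]
  field_simp

theorem lintegral_ofReal_exp_mul_eq {α : Type*} [MeasurableSpace α] (μ : Measure α)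
    {X : α → ℝ} (hX : AEMeasurable X μ) (hX0 : 0 ≤ᵐ[μ] X) {c : ℝ} (hc : 0 ≤ c) :
    ∫⁻ a, ENNReal.ofReal (exp (c * X a)) ∂μ =
      μ Set.univ + ENNReal.ofReal c *
        ∫⁻ t in Set.Ioi 0, μ {a | t < X a} * ENNReal.ofReal (exp (c * t)) := by
  have hcake := lintegral_comp_eq_lintegral_meas_lt_mul μ hX0 hX
    (fun t _ => (by fun_prop : Continuous fun t : ℝ => c * exp (c * t)).intervalIntegrable 0 t)
    (Filter.Eventually.of_forall fun t => by positivity)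
  simp only [integral_const_mul_exp_const_mul] at hcake
  have hsplit : ∀ᵐ a ∂μ,
      ENNReal.ofReal (exp (c * X a)) = 1 + ENNReal.ofReal (exp (c * X a) - 1) := by
    filter_upwards [hX0] with a ha
    rw [← ENNReal.ofReal_one, ← ENNReal.ofReal_add zero_le_one, add_sub_cancel]
    exact sub_nonneg.2 (one_le_exp (mul_nonneg hc ha))
  rw [lintegral_congr_ae hsplit, lintegral_add_left measurable_const, lintegral_one, hcake,
    ← lintegral_const_mul' _ _ ENNReal.ofReal_ne_top]
  congr 1
  refine lintegral_congr fun t => ?_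
  rw [ENNReal.ofReal_mul hc]
  ring

theorem ProbabilityTheory.IndepFun.measure_lt_min {Ω : Type*} [MeasurableSpace Ω] {μ : Measure Ω}
    {X Y : Ω → ℝ} (h : IndepFun X Y μ) (t : ℝ) :
    μ {ω | t < min (X ω) (Y ω)} = μ {ω | t < X ω} * μ {ω | t < Y ω} := by
  rw [show {ω | t < min (X ω) (Y ω)} = X ⁻¹' Set.Ioi t ∩ Y ⁻¹' Set.Ioi t by ext; simp]
  exact h.measure_inter_preimage_eq_mul _ _ measurableSet_Ioi measurableSet_Ioi

theorem ENNReal.ofReal_div_mul_one_add_sub {ρ lam : ℝ} (hρ : 0 ≤ ρ) (hlam : ρ < lam)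
    (A : ENNReal) :
    ENNReal.ofReal (lam / (lam - ρ)) * (1 + ENNReal.ofReal (lam - ρ) * A) -
        ENNReal.ofReal (ρ / (lam - ρ)) = 1 + ENNReal.ofReal lam * A := by
  have hd : 0 < lam - ρ := sub_pos.2 hlam
  have hsplit : ENNReal.ofReal (lam / (lam - ρ)) = 1 + ENNReal.ofReal (ρ / (lam - ρ)) := by
    rw [← ENNReal.ofReal_one, ← ENNReal.ofReal_add zero_le_one (div_nonneg hρ hd.le)]
    congr 1
    field_simp
    ring
  have hcancel :
      ENNReal.ofReal (lam / (lam - ρ)) * ENNReal.ofReal (lam - ρ) = ENNReal.ofReal lam := by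
    rw [← ENNReal.ofReal_mul (div_nonneg (hρ.trans hlam.le) hd.le), div_mul_cancel₀ _ hd.ne']
  rw [mul_add, mul_one, ← mul_assoc, hcancel, hsplit, add_right_comm,
    ENNReal.add_sub_cancel_right ENNReal.ofReal_ne_top]

theorem stmt_11 {Ω : Type*} [MeasureSpace Ω] [IsProbabilityMeasure (volume : Measure Ω)]
    (σ J' : Ω → ℝ) (hσmeas : Measurable σ) (hJmeas : Measurable J')
    (hσ0 : ∀ ω, 0 ≤ σ ω) (hJ0 : ∀ ω, 0 ≤ J' ω)
    (ρ lam : ℝ) (hρ : 0 < ρ) (hlam : ρ < lam)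
    (hindep : IndepFun σ J' volume)
    (hexp : ∀ t : ℝ, 0 ≤ t → volume {ω | t < J' ω} = ENNReal.ofReal (Real.exp (-ρ * t))) :
    ∫⁻ ω, ENNReal.ofReal (Real.exp (lam * min (σ ω) (J' ω))) =
      ENNReal.ofReal (lam / (lam - ρ)) *
          (∫⁻ ω, ENNReal.ofReal (Real.exp ((lam - ρ) * σ ω))) -
        ENNReal.ofReal (ρ / (lam - ρ)) := by
  set A := ∫⁻ t in Set.Ioi 0, volume {ω | t < σ ω} * ENNReal.ofReal (exp ((lam - ρ) * t))
  have hmin : ∫⁻ ω, ENNReal.ofReal (exp (lam * min (σ ω) (J' ω))) = 1 + ENNReal.ofReal lam * A := by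
    rw [lintegral_ofReal_exp_mul_eq _ (hσmeas.min hJmeas).aemeasurable
      (ae_of_all _ fun ω => le_min (hσ0 ω) (hJ0 ω)) (hρ.trans hlam).le, measure_univ]
    congr 2
    refine setLIntegral_congr_fun measurableSet_Ioi fun t ht => ?_
    rw [hindep.measure_lt_min, hexp t (le_of_lt ht), mul_assoc, ← ENNReal.ofReal_mul (exp_nonneg _),
      ← exp_add]
    ring_nf
  have hσ : ∫⁻ ω, ENNReal.ofReal (exp ((lam - ρ) * σ ω)) = 1 + ENNReal.ofReal (lam - ρ) * A := by
    rw [lintegral_ofReal_exp_mul_eq _ hσmeas.aemeasurable (ae_of_all _ hσ0) (sub_pos.2 hlam).le,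
      measure_univ]
  rw [hmin, hσ, ENNReal.ofReal_div_mul_one_add_sub hρ.le hlam]
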